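/- arXiv:1305.0733 — 9 statements merged into one kernel-verified Lean document; each statement's English description precedes it below -/
import Mathlib

section
/- If m > 1 and z = x + iy is a complex number satisfying sin(mπz) = m·sin(πz), then |y| ≤ log(2m+1)/(π(m-1)). -/
/-!
Since `‖sin w‖² = sin² (Re w) + sinh² (Im w)`, we have `sinh |Im w| ≤ ‖sin w‖ ≤ cosh (Im w)`.
Taking norms in `sin (mπz) = m sin (πz)` thus gives `sinh (mt) ≤ m cosh t` for `t = π|y|`, and
bounding the decaying exponentials by `eᵗ` turns this into `e^{(m-1)t} ≤ 2m + 1`.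
-/

open Complex Real

theorem Complex.sq_norm_sin (z : ℂ) : ‖sin z‖ ^ 2 = Real.sin z.re ^ 2 + Real.sinh z.im ^ 2 := by
  have hre : (sin z).re = Real.sin z.re * Real.cosh z.im := by
    rw [sin_eq]; simp [← ofReal_sin, ← ofReal_cos, ← ofReal_cosh, ← ofReal_sinh]
  have him : (sin z).im = Real.cos z.re * Real.sinh z.im := by
    rw [sin_eq]; simp [← ofReal_sin, ← ofReal_cos, ← ofReal_cosh, ← ofReal_sinh]
  rw [Complex.sq_norm, normSq_apply, hre, him]
  linear_combination
    Real.sin z.re ^ 2 * Real.cosh_sq z.im + Real.sinh z.im ^ 2 * Real.sin_sq_add_cos_sq z.re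

theorem Complex.sinh_abs_im_le_norm_sin (z : ℂ) : Real.sinh |z.im| ≤ ‖sin z‖ := by
  refine abs_le_of_sq_le_sq' ?_ (norm_nonneg _) |>.2
  rw [sq_norm_sin, ← Real.abs_sinh, sq_abs]
  nlinarith [sq_nonneg (Real.sin z.re)]

theorem Complex.norm_sin_le_cosh_im (z : ℂ) : ‖sin z‖ ≤ Real.cosh z.im := by
  refine le_of_sq_le_sq ?_ (Real.cosh_pos _).le
  rw [sq_norm_sin, Real.cosh_sq]
  nlinarith [Real.sin_sq_le_one z.re]

theorem Real.sub_one_mul_le_log_of_sinh_mul_le {m t : ℝ} (hm : 0 ≤ m) (ht : 0 ≤ t)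
    (h : Real.sinh (m * t) ≤ m * Real.cosh t) : (m - 1) * t ≤ Real.log (2 * m + 1) := by
  rw [Real.sinh_eq, Real.cosh_eq] at h
  have hmt : Real.exp (-(m * t)) ≤ Real.exp t := Real.exp_le_exp.2 (by nlinarith)
  have ht' : Real.exp (-t) ≤ Real.exp t := Real.exp_le_exp.2 (by linarith)
  have key : Real.exp (m * t) ≤ (2 * m + 1) * Real.exp t := by nlinarith
  rw [Real.le_log_iff_exp_le (by linarith), sub_mul, one_mul, Real.exp_sub,
    div_le_iff₀ (Real.exp_pos t)]
  exact key

theorem imag_bound_odd (m : ℝ) (hm : 1 < m) (z : ℂ)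
    (hz : Complex.sin (m * Real.pi * z) = m * Complex.sin (Real.pi * z)) :
    |z.im| ≤ Real.log (2 * m + 1) / (Real.pi * (m - 1)) := by
  have hm0 : 0 < m := by linarith
  set t := Real.pi * |z.im|
  have hsinh : Real.sinh (m * t) ≤ m * Real.cosh t := calc
    Real.sinh (m * t) = Real.sinh |(m * Real.pi * z : ℂ).im| := by
      simp [t, abs_mul, abs_of_pos hm0, abs_of_pos Real.pi_pos, mul_assoc]
    _ ≤ ‖Complex.sin (m * Real.pi * z)‖ := sinh_abs_im_le_norm_sin _
    _ = m * ‖Complex.sin (Real.pi * z)‖ := by rw [hz, norm_mul, norm_real, norm_of_nonneg hm0.le]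
    _ ≤ m * Real.cosh (Real.pi * z).im := by gcongr; exact norm_sin_le_cosh_im _
    _ = m * Real.cosh t := by
      rw [← Real.cosh_abs]; simp [t, abs_mul, abs_of_pos Real.pi_pos]
  have hlog := Real.sub_one_mul_le_log_of_sinh_mul_le hm0.le (by positivity) hsinh
  rw [le_div_iff₀ (by nlinarith [Real.pi_pos])]
  linarith
end

section
/- If m > 1 and z = x + iy is a complex number satisfying sin(mπz) = -m·sin(πz), then |y| ≤ log(2m+1)/(π(m-1)). -/
/-!
Since `‖sin w‖² = sin² (re w) + sinh² (im w)`, one has `sinh |im w| ≤ ‖sin w‖ ≤ cosh (im w)`.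
With `t = |y|`, the equation gives `sinh (mπt) ≤ ‖sin (mπz)‖ = m ‖sin (πz)‖ ≤ m cosh (πt)`,
and writing `sinh`, `cosh` through exponentials turns this into `exp ((m - 1)πt) ≤ 2m + 1`.
-/

open Complex Real

theorem Complex.normSq_sin (z : ℂ) :
    normSq (sin z) = Real.sin z.re ^ 2 + Real.sinh z.im ^ 2 := by
  rw [sin_eq, ← ofReal_sin, ← ofReal_cosh, ← ofReal_cos, ← ofReal_sinh, ← ofReal_mul,
    ← ofReal_mul, normSq_add_mul_I]
  linear_combination
    Real.sin z.re ^ 2 * Real.cosh_sq z.im + Real.sinh z.im ^ 2 * Real.sin_sq_add_cos_sq z.re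

theorem Real.exp_sub_le_of_sinh_le_mul_cosh {a b c : ℝ} (ha : 0 ≤ a) (hb : 0 ≤ b)
    (hc : 0 ≤ c) (h : sinh a ≤ c * cosh b) : exp (a - b) ≤ 2 * c + 1 := by
  have hexp_a : exp a ≤ (2 * c + 1) * exp b := by
    rw [sinh_eq, cosh_eq] at h
    nlinarith [exp_le_one_iff.mpr (neg_nonpos.mpr ha), exp_le_exp.mpr (by linarith : -b ≤ b),
      one_le_exp hb]
  rwa [exp_sub, div_le_iff₀ (exp_pos b)]

theorem imag_bound_even (m : ℝ) (hm : 1 < m) (z : ℂ)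
    (hz : Complex.sin (m * Real.pi * z) = -(m * Complex.sin (Real.pi * z))) :
    |z.im| ≤ Real.log (2 * m + 1) / (Real.pi * (m - 1)) := by
  have hsinh : Real.sinh (m * π * |z.im|) ≤ m * Real.cosh (π * |z.im|) := calc
    Real.sinh (m * π * |z.im|) = Real.sinh |(m * π * z).im| := by
      rw [← ofReal_mul, im_ofReal_mul, abs_mul, abs_of_pos (by positivity : 0 < m * π)]
    _ ≤ ‖Complex.sin (m * π * z)‖ := sinh_abs_im_le_norm_sin _
    _ = m * ‖Complex.sin (π * z)‖ := by
      rw [hz, norm_neg, norm_mul, norm_real, norm_of_nonneg (by linarith : 0 ≤ m)]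
    _ ≤ m * Real.cosh (π * |z.im|) := by
      rw [← abs_of_pos pi_pos, ← abs_mul, Real.cosh_abs, abs_of_pos pi_pos, ← im_ofReal_mul]
      gcongr
      exact norm_sin_le_cosh_im _
  have hexp := exp_sub_le_of_sinh_le_mul_cosh (by positivity) (by positivity) (by linarith) hsinh
  rw [le_div_iff₀ (mul_pos pi_pos (by linarith)), ← exp_le_exp, Real.exp_log (by linarith)]
  convert hexp using 2
  ring
end

section
/- Let σ > 0, σ ≠ 1, L > 0, and k ∈ ℂ. There exist functions u, v : ℝ → ℂ, not both identically zero on [-L/2, L/2], both odd, satisfying u'' + k²σ²u = k²(1-σ²)v and v'' + k²v = 0 on ℝ, with u(±L/2) = 0 and u'(±L/2) = 0, if and only if (σ-1)·sin((σ+1)kL/2) = (σ+1)·sin((σ-1)kL/2). -/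
open Complex Real

lemma hd_sin (c : ℂ) (x : ℝ) :
    HasDerivAt (fun x : ℝ => Complex.sin (c * x)) (c * Complex.cos (c * x)) x := by
  have h1 : HasDerivAt (fun z : ℂ => Complex.sin (c * z)) (c * Complex.cos (c * x)) (x : ℂ) := by
    have h := (Complex.hasDerivAt_sin (c * x)).comp (x : ℂ) ((hasDerivAt_id (x:ℂ)).const_mul c)
    simpa [Function.comp_def, mul_comm] using h
  exact h1.comp_ofReal

lemma hd_cos (c : ℂ) (x : ℝ) :
    HasDerivAt (fun x : ℝ => Complex.cos (c * x)) (-c * Complex.sin (c * x)) x := by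
  have h1 : HasDerivAt (fun z : ℂ => Complex.cos (c * z)) (-c * Complex.sin (c * x)) (x : ℂ) := by
    have h := (Complex.hasDerivAt_cos (c * x)).comp (x : ℂ) ((hasDerivAt_id (x:ℂ)).const_mul c)
    simpa [Function.comp_def] using h.congr_deriv (by ring)
  exact h1.comp_ofReal

noncomputable def Fn (A B c₁ c₂ : ℂ) : ℝ → ℂ :=
  fun x => A * Complex.sin (c₁ * x) + B * Complex.sin (c₂ * x)

lemma Fn_hasDerivAt (A B c₁ c₂ : ℂ) (x : ℝ) :
    HasDerivAt (Fn A B c₁ c₂)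
      (A * c₁ * Complex.cos (c₁ * x) + B * c₂ * Complex.cos (c₂ * x)) x := by
  have h := ((hd_sin c₁ x).const_mul A).add ((hd_sin c₂ x).const_mul B)
  exact h.congr_deriv (by ring)

lemma Fn_deriv (A B c₁ c₂ : ℂ) :
    deriv (Fn A B c₁ c₂) = fun x : ℝ =>
      A * c₁ * Complex.cos (c₁ * x) + B * c₂ * Complex.cos (c₂ * x) :=
  funext fun x => (Fn_hasDerivAt A B c₁ c₂ x).deriv

lemma Fn_deriv2 (A B c₁ c₂ : ℂ) :
    deriv (deriv (Fn A B c₁ c₂)) = fun x : ℝ =>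
      -(A * c₁ ^ 2) * Complex.sin (c₁ * x) + -(B * c₂ ^ 2) * Complex.sin (c₂ * x) := by
  rw [Fn_deriv]; funext x
  have h := (((hd_cos c₁ x).const_mul (A * c₁)).add ((hd_cos c₂ x).const_mul (B * c₂))).deriv
  exact h.trans (by ring)

lemma Fn_contDiff (A B c₁ c₂ : ℂ) : ContDiff ℝ (⊤ : ℕ∞) (Fn A B c₁ c₂) := by
  have hr : ContDiff ℝ (⊤ : ℕ∞) (fun x : ℝ => (x : ℂ)) := Complex.ofRealCLM.contDiff
  have h1 : ∀ c : ℂ, ContDiff ℝ (⊤ : ℕ∞) (fun x : ℝ => Complex.sin (c * x)) := fun c =>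
    (Complex.contDiff_sin.restrict_scalars ℝ).comp (contDiff_const.mul hr)
  exact (contDiff_const.mul (h1 c₁)).add (contDiff_const.mul (h1 c₂))

lemma Fn_odd (A B c₁ c₂ : ℂ) (x : ℝ) : Fn A B c₁ c₂ (-x) = -Fn A B c₁ c₂ x := by
  simp [Fn, Complex.ofReal_neg, mul_neg, Complex.sin_neg]; ring

lemma uniq (k : ℂ) (hk : k ≠ 0) (w : ℝ → ℂ) (hw : ContDiff ℝ (⊤ : ℕ∞) w)
    (hode : ∀ x, deriv (deriv w) x + k ^ 2 * w x = 0)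
    (h0 : w 0 = 0) (h0' : deriv w 0 = 0) (x : ℝ) : w x = 0 := by
  have hw1 : Differentiable ℝ w := hw.differentiable (by simp)
  have hw2 : Differentiable ℝ (deriv w) :=
    (contDiff_infty_iff_deriv.mp (hw.of_le (by simp))).2.differentiable (by simp)
  set W1 : ℝ → ℂ := fun y => deriv w y * Complex.sin (k * y) - k * w y * Complex.cos (k * y)
    with hW1def
  set W2 : ℝ → ℂ := fun y => deriv w y * Complex.cos (k * y) + k * w y * Complex.sin (k * y)
    with hW2def
  have hd1 : ∀ y, HasDerivAt W1 0 y := by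
    intro y
    have h := ((hw2 y).hasDerivAt.mul (hd_sin k y)).sub
      (((hw1 y).hasDerivAt.const_mul k).mul (hd_cos k y))
    refine h.congr_deriv ?_
    linear_combination Complex.sin (k * y) * hode y
  have hd2 : ∀ y, HasDerivAt W2 0 y := by
    intro y
    have h := ((hw2 y).hasDerivAt.mul (hd_cos k y)).add
      (((hw1 y).hasDerivAt.const_mul k).mul (hd_sin k y))
    refine h.congr_deriv ?_
    linear_combination Complex.cos (k * y) * hode y
  have hc1 : W1 x = W1 0 :=
    is_const_of_deriv_eq_zero (fun y => (hd1 y).differentiableAt) (fun y => (hd1 y).deriv) x 0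
  have hc2 : W2 x = W2 0 :=
    is_const_of_deriv_eq_zero (fun y => (hd2 y).differentiableAt) (fun y => (hd2 y).deriv) x 0
  have e1 : deriv w x * Complex.sin (k * x) - k * w x * Complex.cos (k * x) = 0 := by
    rw [hW1def] at hc1; simpa [h0, h0'] using hc1
  have e2 : deriv w x * Complex.cos (k * x) + k * w x * Complex.sin (k * x) = 0 := by
    rw [hW2def] at hc2; simpa [h0, h0'] using hc2
  have e3 : Complex.sin (k * x) ^ 2 + Complex.cos (k * x) ^ 2 = 1 :=
    Complex.sin_sq_add_cos_sq (k * x)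
  have hkw : k * w x = 0 := by
    linear_combination Complex.sin (k * x) * e2 - Complex.cos (k * x) * e1 - (k * w x) * e3
  exact (mul_eq_zero.mp hkw).resolve_left hk

lemma deriv2_sub (f g : ℝ → ℂ) (hf : ContDiff ℝ (⊤ : ℕ∞) f) (hg : ContDiff ℝ (⊤ : ℕ∞) g) (x : ℝ) :
    deriv (deriv (fun y => f y - g y)) x = deriv (deriv f) x - deriv (deriv g) x := by
  have hf1 : Differentiable ℝ f := hf.differentiable (by simp)
  have hg1 : Differentiable ℝ g := hg.differentiable (by simp)
  have hf2 : Differentiable ℝ (deriv f) :=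
    (contDiff_infty_iff_deriv.mp (hf.of_le (by simp))).2.differentiable (by simp)
  have hg2 : Differentiable ℝ (deriv g) :=
    (contDiff_infty_iff_deriv.mp (hg.of_le (by simp))).2.differentiable (by simp)
  have h1 : deriv (fun y => f y - g y) = fun y => deriv f y - deriv g y :=
    funext fun y => deriv_fun_sub (hf1 y) (hg1 y)
  rw [h1]
  exact deriv_fun_sub (hf2 x) (hg2 x)

theorem odd_eigenfunction_pair_iff (σ L : ℝ) (hσ : 0 < σ) (hσ1 : σ ≠ 1)
    (hL : 0 < L) (k : ℂ) :
    (∃ u v : ℝ → ℂ,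
      ContDiff ℝ (⊤ : ℕ∞) u ∧ ContDiff ℝ (⊤ : ℕ∞) v ∧
      ¬ (∀ x ∈ Set.Icc (-(L / 2)) (L / 2), u x = 0 ∧ v x = 0) ∧
      (∀ x : ℝ, u (-x) = -u x) ∧ (∀ x : ℝ, v (-x) = -v x) ∧
      (∀ x : ℝ, deriv (deriv u) x + k ^ 2 * (σ : ℂ) ^ 2 * u x
          = k ^ 2 * (1 - (σ : ℂ) ^ 2) * v x) ∧
      (∀ x : ℝ, deriv (deriv v) x + k ^ 2 * v x = 0) ∧
      u (L / 2) = 0 ∧ u (-(L / 2)) = 0 ∧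
      deriv u (L / 2) = 0 ∧ deriv u (-(L / 2)) = 0) ↔
    ((σ : ℂ) - 1) * Complex.sin (((σ : ℂ) + 1) * k * L / 2) =
      ((σ : ℂ) + 1) * Complex.sin (((σ : ℂ) - 1) * k * L / 2) := by
  have hσ0 : (σ : ℂ) ≠ 0 := by exact_mod_cast hσ.ne'
  set a : ℂ := (σ : ℂ) * k * (L : ℂ) / 2 with ha
  set b : ℂ := k * (L : ℂ) / 2 with hb
  have hiff : (((σ : ℂ) - 1) * Complex.sin (((σ : ℂ) + 1) * k * L / 2) =
      ((σ : ℂ) + 1) * Complex.sin (((σ : ℂ) - 1) * k * L / 2)) ↔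
      (Complex.sin a * Complex.cos b = (σ : ℂ) * (Complex.cos a * Complex.sin b)) := by
    rw [show ((σ : ℂ) + 1) * k * (L : ℂ) / 2 = a + b by rw [ha, hb]; ring,
        show ((σ : ℂ) - 1) * k * (L : ℂ) / 2 = a - b by rw [ha, hb]; ring,
        Complex.sin_add, Complex.sin_sub]
    constructor <;> intro h
    · linear_combination -h / 2
    · linear_combination -2 * h
  rw [hiff]
  by_cases hk : k = 0
  · subst hk
    constructor
    · intro _
      rw [ha, hb]; simp
    · intro _
      refine ⟨fun _ => 0, fun x => (x : ℂ), contDiff_const, Complex.ofRealCLM.contDiff,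
        ?_, by simp, by simp, ?_, ?_, by simp, by simp, by simp, by simp⟩
      · intro h
        have h2 := (h (L / 2) ⟨by linarith, le_rfl⟩).2
        have h3 : (L / 2 : ℝ) = 0 := by simpa using h2
        linarith
      · intro x; simp
      · intro x
        have hd : deriv (fun x : ℝ => (x : ℂ)) = fun _ => 1 := by
          funext y
          exact (Complex.ofRealCLM.hasDerivAt.congr_deriv (by simp)).deriv
        rw [hd]
        simp
  · -- k ≠ 0
    have hσk : (σ : ℂ) * k ≠ 0 := mul_ne_zero hσ0 hk
    have hcast1 : (σ : ℂ) * k * ((L / 2 : ℝ) : ℂ) = a := by rw [ha]; push_cast; ring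
    have hcast2 : k * ((L / 2 : ℝ) : ℂ) = b := by rw [hb]; push_cast; ring
    constructor
    · rintro ⟨u, v, hu, hv, hnz, huodd, hvodd, hueq, hveq, huL, _, hu'L, _⟩
      have hv0 : v 0 = 0 := by
        have h := hvodd 0; rw [neg_zero] at h; linear_combination h / 2
      have hu0 : u 0 = 0 := by
        have h := huodd 0; rw [neg_zero] at h; linear_combination h / 2
      set c : ℂ := deriv v 0 / k with hc
      -- v = c sin(k x)
      have hvsol : ∀ x, v x = Fn c 0 k k x := by
        intro x
        have hz := uniq k hk (fun y => v y - Fn c 0 k k y) (hv.sub (Fn_contDiff c 0 k k))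
          (fun y => by
            rw [deriv2_sub v (Fn c 0 k k) hv (Fn_contDiff c 0 k k), Fn_deriv2]
            have h1 := hveq y
            simp only [Fn]
            linear_combination h1)
          (by simp [Fn, hv0])
          (by
            have hds : deriv (fun y => v y - Fn c 0 k k y) 0
                = deriv v 0 - deriv (Fn c 0 k k) 0 :=
              deriv_fun_sub (hv.differentiable (by simp) 0)
                ((Fn_contDiff c 0 k k).differentiable (by simp) 0)
            rw [hds, Fn_deriv]
            simp only [Complex.ofReal_zero, mul_zero, Complex.cos_zero, mul_one, zero_mul,
              add_zero, hc]
            field_simp; ring) x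
        exact sub_eq_zero.mp hz
      set d : ℂ := (deriv u 0 + c * k) / ((σ : ℂ) * k) with hd
      -- u = d sin(σ k x) - c sin(k x)
      have husol : ∀ x, u x = Fn d (-c) ((σ : ℂ) * k) k x := by
        intro x
        have hz := uniq ((σ : ℂ) * k) hσk (fun y => u y - Fn d (-c) ((σ : ℂ) * k) k y)
          (hu.sub (Fn_contDiff d (-c) _ k))
          (fun y => by
            rw [deriv2_sub u (Fn d (-c) ((σ : ℂ) * k) k) hu (Fn_contDiff d (-c) _ k), Fn_deriv2]
            have h1 := hueq y
            have h2 := hvsol y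
            simp only [Fn] at h2 ⊢
            linear_combination h1 + k ^ 2 * (1 - (σ : ℂ) ^ 2) * h2)
          (by simp [Fn, hu0])
          (by
            have hds : deriv (fun y => u y - Fn d (-c) ((σ : ℂ) * k) k y) 0
                = deriv u 0 - deriv (Fn d (-c) ((σ : ℂ) * k) k) 0 :=
              deriv_fun_sub (hu.differentiable (by simp) 0)
                ((Fn_contDiff d (-c) _ k).differentiable (by simp) 0)
            rw [hds, Fn_deriv]
            simp only [Complex.ofReal_zero, mul_zero, Complex.cos_zero, mul_one, hd]
            field_simp; ring) x
        exact sub_eq_zero.mp hz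
      -- boundary conditions in terms of d, c
      have he1 : d * Complex.sin a + (-c) * Complex.sin b = 0 := by
        have h := (husol (L / 2)).symm.trans huL
        simp only [Fn, hcast1, hcast2] at h
        exact h
      have he2 : d * ((σ : ℂ) * k) * Complex.cos a + (-c) * k * Complex.cos b = 0 := by
        have hfun : u = Fn d (-c) ((σ : ℂ) * k) k := funext husol
        have h := hu'L
        rw [hfun, Fn_deriv] at h
        simp only [hcast1, hcast2] at h
        exact h
      have he2' : d * (σ : ℂ) * Complex.cos a = c * Complex.cos b := by
        apply mul_left_cancel₀ hk
        linear_combination he2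
      have hdc : ¬(d = 0 ∧ c = 0) := by
        rintro ⟨hd0, hc0⟩
        apply hnz
        intro x _
        constructor
        · rw [husol x]; simp [Fn, hd0, hc0]
        · rw [hvsol x]; simp [Fn, hc0]
      by_cases hd0 : d = 0
      · exfalso
        have hc0 : c ≠ 0 := fun h => hdc ⟨hd0, h⟩
        have hsb : Complex.sin b = 0 := by
          have := he1; rw [hd0] at this
          simpa [hc0] using this
        have hcb : Complex.cos b = 0 := by
          have := he2'; rw [hd0] at this
          simp only [zero_mul] at this
          rcases mul_eq_zero.mp this.symm with h | h
          · exact absurd h hc0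
          · exact h
        have := Complex.sin_sq_add_cos_sq b
        rw [hsb, hcb] at this
        simp at this
      · have hz : d * (Complex.sin a * Complex.cos b - (σ : ℂ) * (Complex.cos a * Complex.sin b))
            = 0 := by
          linear_combination Complex.cos b * he1 - Complex.sin b * he2'
        rcases mul_eq_zero.mp hz with h | h
        · exact absurd h hd0
        · exact sub_eq_zero.mp h
    · intro key
      obtain ⟨A, B, hA, e1, e2⟩ : ∃ A B : ℂ, A ≠ 0 ∧
          A * Complex.sin a = B * Complex.sin b ∧
          A * (σ : ℂ) * Complex.cos a = B * Complex.cos b := by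
        by_cases hcb : Complex.cos b = 0
        · have hsb : Complex.sin b ≠ 0 := by
            intro h
            have := Complex.sin_sq_add_cos_sq b
            rw [h, hcb] at this; simp at this
          exact ⟨Complex.sin b, Complex.sin a, hsb, by ring, by linear_combination -key⟩
        · exact ⟨Complex.cos b, (σ : ℂ) * Complex.cos a, hcb, by linear_combination key, by ring⟩
      refine ⟨Fn A (-B) ((σ : ℂ) * k) k, Fn B 0 k k,
        Fn_contDiff _ _ _ _, Fn_contDiff _ _ _ _, ?_,
        Fn_odd _ _ _ _, Fn_odd _ _ _ _, ?_, ?_, ?_, ?_, ?_, ?_⟩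
      · -- nontrivial
        intro h
        have hmem : Set.Icc (-(L / 2)) (L / 2) ∈ nhds (0 : ℝ) :=
          Icc_mem_nhds (by linarith) (by linarith)
        have hveq0 : Fn B 0 k k =ᶠ[nhds (0 : ℝ)] (fun _ => (0 : ℂ)) :=
          Filter.eventually_of_mem hmem (fun x hx => (h x hx).2)
        have hueq0 : Fn A (-B) ((σ : ℂ) * k) k =ᶠ[nhds (0 : ℝ)] (fun _ => (0 : ℂ)) :=
          Filter.eventually_of_mem hmem (fun x hx => (h x hx).1)
        have hv' : deriv (Fn B 0 k k) 0 = 0 := by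
          rw [hveq0.deriv_eq]; simp
        have hu' : deriv (Fn A (-B) ((σ : ℂ) * k) k) 0 = 0 := by
          rw [hueq0.deriv_eq]; simp
        rw [Fn_deriv] at hv' hu'
        simp only [Complex.ofReal_zero, mul_zero, Complex.cos_zero, mul_one] at hv' hu'
        have hB : B = 0 := by
          have : B * k = 0 := by linear_combination hv'
          exact (mul_eq_zero.mp this).resolve_right hk
        rw [hB] at hu'
        have hA0 : A * ((σ : ℂ) * k) = 0 := by linear_combination hu'
        rcases mul_eq_zero.mp hA0 with h' | h'
        · exact hA h'
        · exact hσk h'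
      · -- ODE for u
        intro x
        rw [Fn_deriv2]
        simp only [Fn]
        ring
      · -- ODE for v
        intro x
        rw [Fn_deriv2]
        simp only [Fn]
        ring
      · -- u(L/2) = 0
        simp only [Fn, hcast1, hcast2]
        linear_combination e1
      · -- u(-(L/2)) = 0
        rw [show -(L / 2) = -(L / 2 : ℝ) from rfl, Fn_odd]
        simp only [Fn, hcast1, hcast2]
        have : A * Complex.sin a + (-B) * Complex.sin b = 0 := by linear_combination e1
        rw [this, neg_zero]
      · -- u'(L/2) = 0
        rw [Fn_deriv]
        simp only [hcast1, hcast2]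
        linear_combination k * e2
      · -- u'(-(L/2)) = 0
        rw [Fn_deriv]
        beta_reduce
        have hc1' : (σ : ℂ) * k * ((-(L / 2) : ℝ) : ℂ) = -a := by rw [ha]; push_cast; ring
        have hc2' : k * ((-(L / 2) : ℝ) : ℂ) = -b := by rw [hb]; push_cast; ring
        rw [hc1', hc2', Complex.cos_neg, Complex.cos_neg]
        linear_combination k * e2
end

section
/- Let σ > 0, σ ≠ 1, L > 0, and k ∈ ℂ. There exist functions u, v : ℝ → ℂ, not both identically zero on [-L/2, L/2], both even, satisfying u'' + k²σ²u = k²(1-σ²)v and v'' + k²v = 0 on ℝ, with u(±L/2) = 0 and u'(±L/2) = 0, if and only if (σ-1)·sin((σ+1)kL/2) = -(σ+1)·sin((σ-1)kL/2). -/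
open Complex Real

lemma hasDerivAt_ccos (c : ℂ) (x : ℝ) :
    HasDerivAt (fun t : ℝ => Complex.cos (c * t)) (-(c * Complex.sin (c * x))) x := by
  have h1 : HasDerivAt (fun z : ℂ => Complex.cos (c * z)) (-(c * Complex.sin (c * x))) (x : ℂ) := by
    exact ((Complex.hasDerivAt_cos (c * x)).comp (x : ℂ)
      ((hasDerivAt_id (x : ℂ)).const_mul c)).congr_deriv (by ring)
  exact h1.comp_ofReal

lemma hasDerivAt_csin (c : ℂ) (x : ℝ) :
    HasDerivAt (fun t : ℝ => Complex.sin (c * t)) (c * Complex.cos (c * x)) x := by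
  have h1 : HasDerivAt (fun z : ℂ => Complex.sin (c * z)) (c * Complex.cos (c * x)) (x : ℂ) := by
    exact ((Complex.hasDerivAt_sin (c * x)).comp (x : ℂ)
      ((hasDerivAt_id (x : ℂ)).const_mul c)).congr_deriv (by ring)
  exact h1.comp_ofReal

lemma contDiff_ccos (c : ℂ) : ContDiff ℝ (⊤ : ℕ∞) (fun t : ℝ => Complex.cos (c * t)) := by
  exact (Complex.contDiff_cos.restrict_scalars ℝ).comp
    ((contDiff_const.mul contDiff_id).comp Complex.ofRealCLM.contDiff)

lemma ode_unique (κ : ℂ) (hκ : κ ≠ 0) (w : ℝ → ℂ) (hw : ContDiff ℝ (⊤ : ℕ∞) w)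
    (hode : ∀ x, deriv (deriv w) x = -(κ ^ 2 * w x)) (h0 : w 0 = 0) (h0' : deriv w 0 = 0) :
    ∀ x, w x = 0 := by
  have hdw : Differentiable ℝ w := hw.differentiable (by simp)
  have hwi : ContDiff ℝ (⊤ : ℕ∞) w := hw.of_le (by simp)
  have hdw' : Differentiable ℝ (deriv w) :=
    ((contDiff_infty_iff_deriv.mp hwi).2).differentiable (by simp)
  set F : ℝ → ℂ := fun x => deriv w x * Complex.cos (κ * x) + κ * w x * Complex.sin (κ * x)
    with hFdef
  set G : ℝ → ℂ := fun x => deriv w x * Complex.sin (κ * x) - κ * w x * Complex.cos (κ * x)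
    with hGdef
  have hF : ∀ x : ℝ, HasDerivAt F 0 x := by
    intro x
    have h := (((hdw' x).hasDerivAt.mul (hasDerivAt_ccos κ x)).add
      ((((hdw x).hasDerivAt.const_mul κ)).mul (hasDerivAt_csin κ x)))
    exact h.congr_deriv (by rw [hode]; ring)
  have hG : ∀ x : ℝ, HasDerivAt G 0 x := by
    intro x
    have h := (((hdw' x).hasDerivAt.mul (hasDerivAt_csin κ x)).sub
      ((((hdw x).hasDerivAt.const_mul κ)).mul (hasDerivAt_ccos κ x)))
    exact h.congr_deriv (by rw [hode]; ring)
  have hFc : ∀ x : ℝ, F x = F 0 := fun x =>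
    is_const_of_deriv_eq_zero (fun y => (hF y).differentiableAt)
      (fun y => (hF y).deriv) x 0
  have hGc : ∀ x : ℝ, G x = G 0 := fun x =>
    is_const_of_deriv_eq_zero (fun y => (hG y).differentiableAt)
      (fun y => (hG y).deriv) x 0
  intro x
  have hF0 : F 0 = 0 := by simp [hFdef, h0, h0']
  have hG0 : G 0 = 0 := by simp [hGdef, h0, h0']
  have hFx := hFc x; have hGx := hGc x
  rw [hF0] at hFx; rw [hG0] at hGx
  simp only [hFdef, hGdef] at hFx hGx
  have hsc := Complex.sin_sq_add_cos_sq (κ * x)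
  have : κ * w x = 0 := by
    linear_combination Complex.sin (κ * x) * hFx - Complex.cos (κ * x) * hGx - κ * w x * hsc
  exact (mul_eq_zero.mp this).resolve_left hκ

lemma deriv_even_zero (w : ℝ → ℂ) (he : ∀ x, w (-x) = w x) : deriv w 0 = 0 := by
  have h : (fun x : ℝ => w (-x)) = w := funext he
  have h2 : deriv (fun x : ℝ => w (-x)) 0 = -deriv w (-(0:ℝ)) := deriv_comp_neg w 0
  rw [h, neg_zero] at h2
  have : (2:ℂ) * deriv w 0 = 0 := by linear_combination h2
  simpa using this

lemma even_sol (κ : ℂ) (hκ : κ ≠ 0) (w : ℝ → ℂ) (hw : ContDiff ℝ (⊤ : ℕ∞) w)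
    (hode : ∀ x, deriv (deriv w) x = -(κ ^ 2 * w x)) (he : ∀ x, w (-x) = w x) :
    ∀ x : ℝ, w x = w 0 * Complex.cos (κ * x) := by
  have hdw : Differentiable ℝ w := hw.differentiable (by simp)
  have hwi : ContDiff ℝ (⊤ : ℕ∞) w := hw.of_le (by simp)
  have hdw' : Differentiable ℝ (deriv w) :=
    ((contDiff_infty_iff_deriv.mp hwi).2).differentiable (by simp)
  set g : ℝ → ℂ := fun x => w x - w 0 * Complex.cos (κ * x) with hgdef
  have hgc : ContDiff ℝ (⊤ : ℕ∞) g := hw.sub (contDiff_const.mul (contDiff_ccos κ))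
  have hgd : ∀ x : ℝ, HasDerivAt g (deriv w x + (w 0 * κ) * Complex.sin (κ * x)) x := by
    intro x
    have h := (hdw x).hasDerivAt.sub ((hasDerivAt_ccos κ x).const_mul (w 0))
    exact h.congr_deriv (by ring)
  have hg' : deriv g = fun x => deriv w x + (w 0 * κ) * Complex.sin (κ * x) :=
    funext fun x => (hgd x).deriv
  have hgode : ∀ x : ℝ, deriv (deriv g) x = -(κ ^ 2 * g x) := by
    intro x
    rw [hg']
    have h := (hdw' x).hasDerivAt.add ((hasDerivAt_csin κ x).const_mul (w 0 * κ))
    rw [show deriv (fun x : ℝ => deriv w x + w 0 * κ * Complex.sin (κ * x)) x = _ from h.deriv,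
      hode x, hgdef]; ring
  have h0 : g 0 = 0 := by simp [hgdef]
  have h0' : deriv g 0 = 0 := by
    rw [hg']
    simp [deriv_even_zero w he]
  have := ode_unique κ hκ g hgc hgode h0 h0'
  intro x
  have hx := this x
  simp only [hgdef] at hx
  exact sub_eq_zero.mp hx

lemma construct (σ L : ℝ) (hL : 0 < L) (k A B : ℂ) (hAB : A ≠ 0 ∨ B ≠ 0)
    (hbc1 : A * Complex.cos ((σ : ℂ) * k * ((L / 2 : ℝ) : ℂ)) =
      B * Complex.cos (k * ((L / 2 : ℝ) : ℂ)))
    (hbc2 : A * ((σ : ℂ) * k) * Complex.sin ((σ : ℂ) * k * ((L / 2 : ℝ) : ℂ)) =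
      B * k * Complex.sin (k * ((L / 2 : ℝ) : ℂ))) :
    (∃ u v : ℝ → ℂ,
      ContDiff ℝ (⊤ : ℕ∞) u ∧ ContDiff ℝ (⊤ : ℕ∞) v ∧
      ¬ (∀ x ∈ Set.Icc (-(L / 2)) (L / 2), u x = 0 ∧ v x = 0) ∧
      (∀ x : ℝ, u (-x) = u x) ∧ (∀ x : ℝ, v (-x) = v x) ∧
      (∀ x : ℝ, deriv (deriv u) x + k ^ 2 * (σ : ℂ) ^ 2 * u x
          = k ^ 2 * (1 - (σ : ℂ) ^ 2) * v x) ∧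
      (∀ x : ℝ, deriv (deriv v) x + k ^ 2 * v x = 0) ∧
      u (L / 2) = 0 ∧ u (-(L / 2)) = 0 ∧
      deriv u (L / 2) = 0 ∧ deriv u (-(L / 2)) = 0) := by
  set σk : ℂ := (σ : ℂ) * k with hσk
  refine ⟨fun x : ℝ => A * Complex.cos (σk * x) - B * Complex.cos (k * x),
    fun x : ℝ => B * Complex.cos (k * x), ?_, ?_, ?_, ?_, ?_, ?_, ?_, ?_, ?_, ?_, ?_⟩
  · exact (contDiff_const.mul (contDiff_ccos σk)).sub (contDiff_const.mul (contDiff_ccos k))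
  · exact contDiff_const.mul (contDiff_ccos k)
  · intro hall
    obtain ⟨h1, h2⟩ := hall 0 ⟨by linarith, by linarith⟩
    simp only [Complex.ofReal_zero, mul_zero, Complex.cos_zero, mul_one] at h1 h2
    rcases hAB with hA | hB
    · exact hA (by rw [h2] at h1; simpa using h1)
    · exact hB h2
  · intro x; push_cast [Complex.ofReal_neg]; simp [mul_neg, Complex.cos_neg]
  · intro x; push_cast [Complex.ofReal_neg]; simp [mul_neg, Complex.cos_neg]
  · -- ODE for u
    have hu1 : ∀ x : ℝ, HasDerivAt (fun x : ℝ => A * Complex.cos (σk * x) - B * Complex.cos (k * x))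
        (-(A * σk * Complex.sin (σk * x)) + B * k * Complex.sin (k * x)) x := by
      intro x
      have h := ((hasDerivAt_ccos σk x).const_mul A).sub ((hasDerivAt_ccos k x).const_mul B)
      exact h.congr_deriv (by ring)
    have hu' : deriv (fun x : ℝ => A * Complex.cos (σk * x) - B * Complex.cos (k * x))
        = fun x : ℝ => -(A * σk * Complex.sin (σk * x)) + B * k * Complex.sin (k * x) :=
      funext fun x => (hu1 x).deriv
    intro x
    rw [hu']
    have h2 := (((hasDerivAt_csin σk x).const_mul (A * σk)).neg).add
      ((hasDerivAt_csin k x).const_mul (B * k))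
    rw [show deriv (fun x : ℝ => -(A * σk * Complex.sin (σk * x)) + B * k * Complex.sin (k * x)) x
      = _ from h2.deriv, hσk]
    ring
  · -- ODE for v
    intro x
    have hv1 : ∀ x : ℝ, HasDerivAt (fun x : ℝ => B * Complex.cos (k * x))
        (-(B * k * Complex.sin (k * x))) x := by
      intro x
      have h := (hasDerivAt_ccos k x).const_mul B
      exact h.congr_deriv (by ring)
    have hv' : deriv (fun x : ℝ => B * Complex.cos (k * x))
        = fun x : ℝ => -(B * k * Complex.sin (k * x)) := funext fun x => (hv1 x).deriv
    rw [hv']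
    have h2 := ((hasDerivAt_csin k x).const_mul (B * k)).neg
    rw [show deriv (fun x : ℝ => -(B * k * Complex.sin (k * x))) x = _ from h2.deriv]
    ring
  · show A * Complex.cos (σk * ((L / 2 : ℝ) : ℂ)) - B * Complex.cos (k * ((L / 2 : ℝ) : ℂ)) = 0
    rw [sub_eq_zero]; exact hbc1
  · show A * Complex.cos (σk * ((-(L / 2) : ℝ) : ℂ)) - B * Complex.cos (k * ((-(L / 2) : ℝ) : ℂ)) = 0
    rw [Complex.ofReal_neg, mul_neg, mul_neg, Complex.cos_neg, Complex.cos_neg, sub_eq_zero]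
    exact hbc1
  · have hu1 := ((hasDerivAt_ccos σk (L / 2)).const_mul A).sub ((hasDerivAt_ccos k (L / 2)).const_mul B)
    rw [show deriv (fun x : ℝ => A * Complex.cos (σk * x) - B * Complex.cos (k * x)) (L / 2)
      = _ from hu1.deriv]
    linear_combination -hbc2
  · have hu1 := ((hasDerivAt_ccos σk (-(L / 2))).const_mul A).sub
      ((hasDerivAt_ccos k (-(L / 2))).const_mul B)
    rw [show deriv (fun x : ℝ => A * Complex.cos (σk * x) - B * Complex.cos (k * x)) (-(L / 2))
      = _ from hu1.deriv, Complex.ofReal_neg]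
    simp only [mul_neg, Complex.sin_neg, neg_neg, mul_comm]
    linear_combination hbc2

theorem even_eigenfunction_pair_iff (σ L : ℝ) (hσ : 0 < σ) (hσ1 : σ ≠ 1)
    (hL : 0 < L) (k : ℂ) :
    (∃ u v : ℝ → ℂ,
      ContDiff ℝ (⊤ : ℕ∞) u ∧ ContDiff ℝ (⊤ : ℕ∞) v ∧
      ¬ (∀ x ∈ Set.Icc (-(L / 2)) (L / 2), u x = 0 ∧ v x = 0) ∧
      (∀ x : ℝ, u (-x) = u x) ∧ (∀ x : ℝ, v (-x) = v x) ∧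
      (∀ x : ℝ, deriv (deriv u) x + k ^ 2 * (σ : ℂ) ^ 2 * u x
          = k ^ 2 * (1 - (σ : ℂ) ^ 2) * v x) ∧
      (∀ x : ℝ, deriv (deriv v) x + k ^ 2 * v x = 0) ∧
      u (L / 2) = 0 ∧ u (-(L / 2)) = 0 ∧
      deriv u (L / 2) = 0 ∧ deriv u (-(L / 2)) = 0) ↔
    ((σ : ℂ) - 1) * Complex.sin (((σ : ℂ) + 1) * k * L / 2) =
      -(((σ : ℂ) + 1) * Complex.sin (((σ : ℂ) - 1) * k * L / 2)) := by
  have e1 : ((σ : ℂ) + 1) * k * L / 2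
      = (σ : ℂ) * k * ((L / 2 : ℝ) : ℂ) + k * ((L / 2 : ℝ) : ℂ) := by push_cast; ring
  have e2 : ((σ : ℂ) - 1) * k * L / 2
      = (σ : ℂ) * k * ((L / 2 : ℝ) : ℂ) - k * ((L / 2 : ℝ) : ℂ) := by push_cast; ring
  set sσ := Complex.sin ((σ : ℂ) * k * ((L / 2 : ℝ) : ℂ)) with hsσ
  set cσ := Complex.cos ((σ : ℂ) * k * ((L / 2 : ℝ) : ℂ)) with hcσ
  set s := Complex.sin (k * ((L / 2 : ℝ) : ℂ)) with hs
  set c := Complex.cos (k * ((L / 2 : ℝ) : ℂ)) with hc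
  constructor
  · rintro ⟨u, v, hu, hv, hnt, heu, hev, hodeu, hodev, hbu1, hbu2, hdu1, hdu2⟩
    by_cases hk : k = 0
    · simp [hk]
    have hκσ : (σ : ℂ) * k ≠ 0 :=
      mul_ne_zero (Complex.ofReal_ne_zero.mpr (ne_of_gt hσ)) hk
    have hdu : Differentiable ℝ u := hu.differentiable (by simp)
    have hdv : Differentiable ℝ v := hv.differentiable (by simp)
    have hdu' : Differentiable ℝ (deriv u) :=
      ((contDiff_infty_iff_deriv.mp (hu.of_le (by simp))).2).differentiable (by simp)
    have hdv' : Differentiable ℝ (deriv v) :=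
      ((contDiff_infty_iff_deriv.mp (hv.of_le (by simp))).2).differentiable (by simp)
    -- v is a multiple of cos (k x)
    have hveq : ∀ x : ℝ, v x = v 0 * Complex.cos (k * x) :=
      even_sol k hk v hv (fun x => by linear_combination hodev x) hev
    -- u + v is a multiple of cos (σ k x)
    have hw : ContDiff ℝ (⊤ : ℕ∞) (fun x : ℝ => u x + v x) := hu.add hv
    have hw' : deriv (fun x : ℝ => u x + v x) = fun x => deriv u x + deriv v x :=
      funext fun x => deriv_add (hdu x) (hdv x)
    have hwode : ∀ x : ℝ, deriv (deriv (fun x : ℝ => u x + v x)) x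
        = -(((σ : ℂ) * k) ^ 2 * (u x + v x)) := by
      intro x
      rw [hw', show deriv (fun x => deriv u x + deriv v x) x
        = deriv (deriv u) x + deriv (deriv v) x from deriv_add (hdu' x) (hdv' x)]
      linear_combination hodeu x + hodev x
    have hweq := even_sol ((σ : ℂ) * k) hκσ (fun x : ℝ => u x + v x) hw hwode
      (fun x => by simp only [heu x, hev x])
    set A : ℂ := u 0 + v 0 with hA
    set B : ℂ := v 0 with hB
    have hueq : ∀ x : ℝ, u x = A * Complex.cos ((σ : ℂ) * k * x) - B * Complex.cos (k * x) := by
      intro x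
      linear_combination hweq x - hveq x
    -- boundary conditions in terms of A, B
    have hbc1 : A * cσ = B * c := by
      have h := hueq (L / 2)
      rw [hbu1] at h
      linear_combination -h
    have hud : deriv u = fun x : ℝ =>
        A * -((σ : ℂ) * k * Complex.sin ((σ : ℂ) * k * x)) - B * -(k * Complex.sin (k * x)) := by
      rw [funext hueq]
      exact funext fun x =>
        (((hasDerivAt_ccos ((σ : ℂ) * k) x).const_mul A).sub
          ((hasDerivAt_ccos k x).const_mul B)).deriv
    have hbc2 : (σ : ℂ) * A * sσ = B * s := by
      have h := hdu1
      rw [hud] at h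
      simp only at h
      have h2 : k * ((σ : ℂ) * A * sσ - B * s) = 0 := by linear_combination -h
      rcases mul_eq_zero.mp h2 with h3 | h3
      · exact absurd h3 hk
      · exact sub_eq_zero.mp h3
    -- A, B not both zero
    have hD : cσ * s - (σ : ℂ) * sσ * c = 0 := by
      have hAD : A * (cσ * s - (σ : ℂ) * sσ * c) = 0 := by
        linear_combination s * hbc1 - c * hbc2
      have hBD : B * (cσ * s - (σ : ℂ) * sσ * c) = 0 := by
        linear_combination (σ : ℂ) * sσ * hbc1 - cσ * hbc2
      by_cases hA0 : A = 0
      · by_cases hB0 : B = 0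
        · exfalso
          apply hnt
          intro x _
          constructor
          · rw [hueq x, hA0, hB0]; ring
          · rw [hveq x, hB0]; ring
        · exact (mul_eq_zero.mp hBD).resolve_left hB0
      · exact (mul_eq_zero.mp hAD).resolve_left hA0
    rw [e1, e2, Complex.sin_add, Complex.sin_sub, ← hsσ, ← hcσ, ← hs, ← hc]
    linear_combination (-2 : ℂ) * hD
  · intro hcond
    have hD : cσ * s = (σ : ℂ) * sσ * c := by
      rw [e1, e2, Complex.sin_add, Complex.sin_sub, ← hsσ, ← hcσ, ← hs, ← hc] at hcond
      linear_combination (-1/2 : ℂ) * hcond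
    by_cases hcc : c = 0 ∧ cσ = 0
    · -- degenerate case: take A = sin a, B = σ sin σa
      have hsσ1 : sσ ≠ 0 := by
        intro h0
        have := Complex.sin_sq_add_cos_sq ((σ : ℂ) * k * ((L / 2 : ℝ) : ℂ))
        rw [← hsσ, ← hcσ, h0, hcc.2] at this
        simp at this
      refine construct σ L hL k s ((σ : ℂ) * sσ) ?_ ?_ ?_
      · exact Or.inr (mul_ne_zero (Complex.ofReal_ne_zero.mpr (ne_of_gt hσ)) hsσ1)
      · simp only [← hsσ, ← hcσ, ← hs, ← hc]; rw [hcc.1, hcc.2]; ring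
      · simp only [← hsσ, ← hcσ, ← hs, ← hc]; ring
    · refine construct σ L hL k c cσ ?_ ?_ ?_
      · rcases not_and_or.mp hcc with h | h
        · exact Or.inl h
        · exact Or.inr h
      · simp only [← hsσ, ← hcσ, ← hs, ← hc]; ring
      · simp only [← hsσ, ← hcσ, ← hs, ← hc]; linear_combination -k * hD
end

section
/- Let m > 1 be real and β ≥ m be real. Then every root of p_β(z) = sin(mπz) - β·sin(πz) with β > m is simple, i.e., p_β(z) = 0 and p_β'(z) = 0 cannot hold simultaneously when β > m. -/
open Complex Real

/-!
With `w = π z`, a double root means `sin (m w) = β sin w` and `m cos (m w) = β cos w`.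
Eliminating `m w` through `sin² + cos² = 1` gives `β² (m² - 1) sin² w = m² - β² < 0`, so
`Im (sin w) = cos a · sinh b ≠ 0`, where `w = a + b i`. The imaginary part of the first equation
and the real part of the second then force `sinh (m b) cosh b = m cosh (m b) sinh b`, that is
`tanh (m b) = m tanh b` with `b ≠ 0`, which strict concavity of `tanh` on `[0, ∞)` rules out
for `m > 1`.
-/

open Set in
lemma Real.sinh_mul_mul_cosh_lt {m b : ℝ} (hm : 1 < m) (hb : 0 < b) :
    sinh (m * b) * cosh b < m * cosh (m * b) * sinh b := by
  let f : ℝ → ℝ := fun t ↦ m * cosh (m * t) * sinh t - sinh (m * t) * cosh t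
  have hf (t : ℝ) : HasDerivAt f ((m ^ 2 - 1) * sinh (m * t) * sinh t) t := by
    have hmt : HasDerivAt (m * ·) m t := by simpa using (hasDerivAt_id t).const_mul m
    exact (((hmt.cosh.const_mul m).mul (hasDerivAt_sinh t)).sub
      (hmt.sinh.mul (hasDerivAt_cosh t))).congr_deriv (by ring)
  have hmono : StrictMonoOn f (Ici 0) := by
    refine strictMonoOn_of_deriv_pos (convex_Ici 0)
      (fun t _ ↦ (hf t).continuousAt.continuousWithinAt) fun t ht ↦ ?_
    rw [interior_Ici, mem_Ioi] at ht
    rw [(hf t).deriv]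
    have hmt : 0 < m * t := by positivity
    exact mul_pos (mul_pos (by nlinarith) (sinh_pos_iff.2 hmt)) (sinh_pos_iff.2 ht)
  simpa [f] using hmono self_mem_Ici hb.le hb

lemma Real.sinh_mul_mul_cosh_ne {m b : ℝ} (hm : 1 < m) (hb : b ≠ 0) :
    sinh (m * b) * cosh b ≠ m * cosh (m * b) * sinh b := by
  rcases hb.lt_or_gt with hb | hb
  · have h := sinh_mul_mul_cosh_lt hm (neg_pos.2 hb)
    simp only [mul_neg, sinh_neg, cosh_neg] at h
    linarith
  · exact (sinh_mul_mul_cosh_lt hm hb).ne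

lemma Complex.sin_im (z : ℂ) : (sin z).im = Real.cos z.re * Real.sinh z.im := by
  rw [sin_eq]; simp [← ofReal_sin, ← ofReal_cos, ← ofReal_sinh, ← ofReal_cosh]

lemma Complex.cos_re (z : ℂ) : (cos z).re = Real.cos z.re * Real.cosh z.im := by
  rw [cos_eq]; simp [← ofReal_sin, ← ofReal_cos, ← ofReal_sinh, ← ofReal_cosh]

lemma Complex.im_ne_zero_of_re_sq_neg {x : ℂ} (h : (x ^ 2).re < 0) : x.im ≠ 0 := by
  intro hx
  rw [sq, mul_re, hx] at h
  nlinarith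

lemma sin_sq_of_double_root {m β w : ℂ} (h₁ : sin (m * w) = β * sin w)
    (h₂ : m * cos (m * w) = β * cos w) :
    β ^ 2 * (m ^ 2 - 1) * sin w ^ 2 = m ^ 2 - β ^ 2 := by
  linear_combination m ^ 2 * Complex.sin_sq_add_cos_sq (m * w)
    - β ^ 2 * Complex.sin_sq_add_cos_sq w - m ^ 2 * (sin (m * w) + β * sin w) * h₁
    - (m * cos (m * w) + β * cos w) * h₂

lemma not_double_root {m β : ℝ} (hm : 1 < m) (hβ : m < β) (w : ℂ) :
    ¬ (sin (m * w) = β * sin w ∧ m * cos (m * w) = β * cos w) := by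
  rintro ⟨h₁, h₂⟩
  have hsin : (sin w).im ≠ 0 := by
    have h := congrArg re (sin_sq_of_double_root h₁ h₂)
    norm_cast at h
    rw [re_ofReal_mul] at h
    refine im_ne_zero_of_re_sq_neg (neg_of_mul_neg_right (a := β ^ 2 * (m ^ 2 - 1)) ?_ ?_)
    · rw [h]; nlinarith
    · have : 0 < m ^ 2 - 1 := by nlinarith
      positivity
  rw [sin_im] at hsin
  have him := congrArg im h₁
  have hre := congrArg re h₂
  simp only [sin_im, cos_re, re_ofReal_mul, im_ofReal_mul] at him hre
  have key : β * Real.cos w.re *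
      (Real.sinh (m * w.im) * Real.cosh w.im - m * Real.cosh (m * w.im) * Real.sinh w.im) = 0 := by
    linear_combination Real.sinh (m * w.im) * hre.symm - m * Real.cosh (m * w.im) * him.symm
  have hb : w.im ≠ 0 := fun hb ↦ hsin (by simp [hb])
  exact mul_ne_zero (mul_ne_zero (by linarith) (left_ne_zero_of_mul hsin))
    (sub_ne_zero.2 (Real.sinh_mul_mul_cosh_ne hm hb)) key

theorem roots_simple_of_beta_gt_m (m β : ℝ) (hm : 1 < m) (hβ : m < β) (z : ℂ) :
    ¬ (Complex.sin (m * Real.pi * z) - β * Complex.sin (Real.pi * z) = 0 ∧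
       m * Real.pi * Complex.cos (m * Real.pi * z)
         - β * Real.pi * Complex.cos (Real.pi * z) = 0) := by
  rintro ⟨h₁, h₂⟩
  have hπ : (π : ℂ) ≠ 0 := ofReal_ne_zero.2 pi_ne_zero
  rw [mul_assoc (m : ℂ) π z] at h₁ h₂
  refine not_double_root hm hβ (π * z) ⟨by linear_combination h₁, mul_left_cancel₀ hπ ?_⟩
  linear_combination h₂
end

section
/- Let m > 1 and β = m. If z ∈ ℂ satisfies sin(mπz) = m·sin(πz) and mπ·cos(mπz) = mπ·cos(πz) (i.e., z is a multiple root of p_m(z) = sin(mπz) - m·sin(πz)), then cos(πz) = cos(mπz) = ±1, so that z and mz are both integers of the same parity. -/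
/-! If `z` is a double root of `sin (m π z) - m sin (π z)`, then `sin (m π z) = m sin (π z)` and
`cos (m π z) = cos (π z)`; subtracting the two Pythagorean identities gives
`(m² - 1) sin² (π z) = 0`, so `sin (π z) = 0` and both cosines equal the same sign `±1`.
The parity statement then reads off `cos (π w) = 1 ↔ w ∈ 2ℤ` and `cos (π w) = -1 ↔ w ∈ 2ℤ + 1`. -/

open Complex Real

theorem Complex.sin_eq_zero_of_sin_eq_mul_of_cos_eq {x y c : ℂ} (hc : c ^ 2 ≠ 1)
    (hsin : Complex.sin x = c * Complex.sin y) (hcos : Complex.cos x = Complex.cos y) :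
    Complex.sin y = 0 := by
  have hsq : (c ^ 2 - 1) * Complex.sin y ^ 2 = 0 := by
    linear_combination -(Complex.sin x + c * Complex.sin y) * hsin
      + Complex.sin_sq_add_cos_sq x - Complex.sin_sq_add_cos_sq y
      - (Complex.cos x + Complex.cos y) * hcos
  exact pow_eq_zero_iff two_ne_zero |>.1 <| (mul_eq_zero.1 hsq).resolve_left (sub_ne_zero.2 hc)

theorem Complex.exists_even_int_eq_of_cos_pi_mul_eq_one {w : ℂ}
    (h : Complex.cos (Real.pi * w) = 1) : ∃ n : ℤ, w = n ∧ Even n := by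
  obtain ⟨k, hk⟩ := Complex.cos_eq_one_iff.1 h
  refine ⟨2 * k, mul_left_cancel₀ (ofReal_ne_zero.2 Real.pi_ne_zero) ?_, even_two_mul k⟩
  push_cast
  linear_combination -hk

theorem Complex.exists_odd_int_eq_of_cos_pi_mul_eq_neg_one {w : ℂ}
    (h : Complex.cos (Real.pi * w) = -1) : ∃ n : ℤ, w = n ∧ Odd n := by
  obtain ⟨k, hk⟩ := Complex.cos_eq_neg_one_iff.1 h
  refine ⟨2 * k + 1, mul_left_cancel₀ (ofReal_ne_zero.2 Real.pi_ne_zero) ?_, odd_two_mul_add_one k⟩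
  push_cast
  linear_combination -hk

theorem multiple_root_beta_eq_m (m : ℝ) (hm : 1 < m) (z : ℂ)
    (h1 : Complex.sin (m * Real.pi * z) = m * Complex.sin (Real.pi * z))
    (h2 : m * Real.pi * Complex.cos (m * Real.pi * z)
            = m * Real.pi * Complex.cos (Real.pi * z)) :
    ((Complex.cos (Real.pi * z) = 1 ∧ Complex.cos (m * Real.pi * z) = 1) ∨
     (Complex.cos (Real.pi * z) = -1 ∧ Complex.cos (m * Real.pi * z) = -1)) ∧
    ∃ a b : ℤ, z = (a : ℂ) ∧ (m : ℂ) * z = (b : ℂ) ∧ (Even a ↔ Even b) := by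
  have hmπ : (m : ℂ) * Real.pi ≠ 0 := by
    exact_mod_cast mul_ne_zero (by linarith : m ≠ 0) Real.pi_ne_zero
  have hcos : Complex.cos (m * Real.pi * z) = Complex.cos (Real.pi * z) :=
    mul_left_cancel₀ hmπ h2
  have hm2 : (m : ℂ) ^ 2 ≠ 1 := by exact_mod_cast (by nlinarith : m ^ 2 ≠ 1)
  have hsin := Complex.sin_eq_zero_of_sin_eq_mul_of_cos_eq hm2 h1 hcos
  have hmz : (m : ℂ) * Real.pi * z = Real.pi * (m * z) := by ring
  rcases Complex.sin_eq_zero_iff_cos_eq.1 hsin with h | h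
  · refine ⟨Or.inl ⟨h, hcos.trans h⟩, ?_⟩
    obtain ⟨a, rfl, ha⟩ := Complex.exists_even_int_eq_of_cos_pi_mul_eq_one h
    obtain ⟨b, hb, hb'⟩ := Complex.exists_even_int_eq_of_cos_pi_mul_eq_one (hmz ▸ hcos.trans h)
    exact ⟨a, b, rfl, hb, iff_of_true ha hb'⟩
  · refine ⟨Or.inr ⟨h, hcos.trans h⟩, ?_⟩
    obtain ⟨a, rfl, ha⟩ := Complex.exists_odd_int_eq_of_cos_pi_mul_eq_neg_one h
    obtain ⟨b, hb, hb'⟩ :=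
      Complex.exists_odd_int_eq_of_cos_pi_mul_eq_neg_one (hmz ▸ hcos.trans h)
    exact ⟨a, b, rfl, hb, iff_of_false (Int.not_even_iff_odd.2 ha) (Int.not_even_iff_odd.2 hb')⟩
end

section
/- Let m > 1 be real and j an integer such that j/m is an integer and j + j/m is even. Then z = j/m is a root of multiplicity at least 3 of p(z) = sin(mπz) - m·sin(πz), i.e., p(j/m) = p'(j/m) = p''(j/m) = 0 but p'''(j/m) ≠ 0. -/
/-!
At `z = j / m = n` both `sin (m π z) = sin (j π)` and `sin (π z) = sin (n π)` vanish, so every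
even derivative of `sin (a z) - c sin (b z)` vanishes there. Since `j ≡ n (mod 2)`, also
`cos (j π) = cos (n π)`, and the `(2k+1)`-st derivative is `± (a^(2k+1) - c b^(2k+1)) cos (j π)`.
With `a = m π`, `b = π`, `c = m` this coefficient is `0` for `k = 0` and `m π³ (m² - 1) ≠ 0`
for `k = 1`.
-/

open Complex Real

namespace Complex

lemma cos_ne_zero_of_sin_eq_zero {x : ℂ} (h : sin x = 0) : cos x ≠ 0 := by
  intro hc
  simpa [h, hc] using sin_sq_add_cos_sq x

lemma cos_int_mul_pi_eq_of_even_add {j n : ℤ} (h : Even (j + n)) :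
    cos (j * π) = cos (n * π) := by
  obtain ⟨k, hk⟩ : Even (j - n) := Int.even_sub.mpr (Int.even_add.mp h)
  rw [← cos_add_int_mul_two_pi (n * π) k]
  congr 1
  rw [show (j : ℂ) = n + k + k by exact_mod_cast (by omega : j = n + k + k)]
  ring

end Complex

section SinSubSin

variable (a b c : ℂ)

lemma iteratedDeriv_sin_mul_sub_mul_sin_mul (k : ℕ) (z : ℂ) :
    iteratedDeriv k (fun z => Complex.sin (a * z) - c * Complex.sin (b * z)) z =
      a ^ k * iteratedDeriv k Complex.sin (a * z) -
        c * (b ^ k * iteratedDeriv k Complex.sin (b * z)) := by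
  rw [iteratedDeriv_fun_sub (by fun_prop) (by fun_prop), iteratedDeriv_const_mul_field,
    iteratedDeriv_comp_const_mul Complex.contDiff_sin,
    iteratedDeriv_comp_const_mul Complex.contDiff_sin]

variable {a b} {z : ℂ}

lemma iteratedDeriv_even_sin_mul_sub_mul_sin_mul (ha : Complex.sin (a * z) = 0)
    (hb : Complex.sin (b * z) = 0) (k : ℕ) :
    iteratedDeriv (2 * k) (fun z => Complex.sin (a * z) - c * Complex.sin (b * z)) z = 0 := by
  simp [iteratedDeriv_sin_mul_sub_mul_sin_mul, ha, hb]

lemma iteratedDeriv_odd_sin_mul_sub_mul_sin_mul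
    (hcos : Complex.cos (a * z) = Complex.cos (b * z)) (k : ℕ) :
    iteratedDeriv (2 * k + 1) (fun z => Complex.sin (a * z) - c * Complex.sin (b * z)) z =
      (-1) ^ k * (a ^ (2 * k + 1) - c * b ^ (2 * k + 1)) * Complex.cos (a * z) := by
  simp only [iteratedDeriv_sin_mul_sub_mul_sin_mul, Complex.iteratedDeriv_odd_sin, Pi.mul_apply,
    Pi.pow_apply, Pi.neg_apply, Pi.one_apply, hcos]
  ring

end SinSubSin

theorem triple_root_even_case (m : ℝ) (hm : 1 < m) (j n : ℤ)
    (hn : (j : ℝ) = n * m) (hpar : Even (j + n)) :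
    (fun z : ℂ => Complex.sin (m * Real.pi * z) - m * Complex.sin (Real.pi * z))
        ((j : ℂ) / m) = 0 ∧
    deriv (fun z : ℂ => Complex.sin (m * Real.pi * z) - m * Complex.sin (Real.pi * z))
        ((j : ℂ) / m) = 0 ∧
    iteratedDeriv 2
      (fun z : ℂ => Complex.sin (m * Real.pi * z) - m * Complex.sin (Real.pi * z))
        ((j : ℂ) / m) = 0 ∧
    iteratedDeriv 3
      (fun z : ℂ => Complex.sin (m * Real.pi * z) - m * Complex.sin (Real.pi * z))
        ((j : ℂ) / m) ≠ 0 := by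
  have hm0 : (m : ℂ) ≠ 0 := by exact_mod_cast (zero_lt_one.trans hm).ne'
  have hz : (j : ℂ) / m = n := by
    rw [div_eq_iff hm0]; exact_mod_cast hn
  have harg : (m : ℂ) * π * n = j * π := by rw [← hz]; field_simp
  have hsin_a : Complex.sin (m * π * n) = 0 := harg ▸ Complex.sin_int_mul_pi j
  have hsin_b : Complex.sin (π * n) = 0 := mul_comm (n : ℂ) π ▸ Complex.sin_int_mul_pi n
  have hcos : Complex.cos (m * π * n) = Complex.cos (π * n) := by
    rw [harg, mul_comm (π : ℂ)]
    exact Complex.cos_int_mul_pi_eq_of_even_add hpar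
  have hm2 : (m : ℂ) ^ 2 - 1 ≠ 0 :=
    sub_ne_zero.mpr (by exact_mod_cast (one_lt_pow₀ hm two_ne_zero).ne')
  rw [hz]
  refine ⟨by simpa using iteratedDeriv_even_sin_mul_sub_mul_sin_mul m hsin_a hsin_b 0,
    ?_, iteratedDeriv_even_sin_mul_sub_mul_sin_mul m hsin_a hsin_b 1, ?_⟩
  · rw [← iteratedDeriv_one]
    simpa using iteratedDeriv_odd_sin_mul_sub_mul_sin_mul m hcos 0
  · rw [iteratedDeriv_odd_sin_mul_sub_mul_sin_mul m hcos 1,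
      show ((m : ℂ) * π) ^ (2 * 1 + 1) - m * π ^ (2 * 1 + 1) = m * π ^ 3 * (m ^ 2 - 1) by ring]
    simp [hm0, pi_ne_zero, hm2, Complex.cos_ne_zero_of_sin_eq_zero hsin_a]
end

section
/- Let m > 1 be real and j an integer such that j/m is an integer and j + j/m is odd. Then z = j/m is a simple root of p(z) = sin(mπz) - m·sin(πz), i.e., p(j/m) = 0 and p'(j/m) ≠ 0. -/
/-! Since `j = n m`, the point `j / m` is the integer `n`, where both sines vanish, and
`p'(n) = m π (cos (j π) - cos (n π)) = m π ((-1) ^ j - (-1) ^ n)`, which is nonzero because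
`j` and `n` have opposite parity. -/

open Complex Real

theorem Complex.cos_int_mul_pi (n : ℤ) : Complex.cos (n * π) = (-1) ^ n := by
  have h := congrArg ofReal (Real.cos_int_mul_pi n)
  push_cast at h
  exact h

theorem neg_one_zpow_ne_of_odd_add {K : Type*} [DivisionRing K] (hK : ringChar K ≠ 2)
    {j n : ℤ} (hodd : Odd (j + n)) : (-1 : K) ^ j ≠ (-1) ^ n := by
  intro h
  have h1 : (-1 : K) ^ (j + n) = 1 := by
    rw [zpow_add₀ (neg_ne_zero.mpr one_ne_zero), h, ← zpow_add₀ (neg_ne_zero.mpr one_ne_zero)]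
    exact (Even.add_self n).neg_one_zpow
  exact Ring.neg_one_ne_one_of_char_ne_two hK (hodd.neg_one_zpow.symm.trans h1)

theorem Complex.hasDerivAt_sin_const_mul (a z : ℂ) :
    HasDerivAt (fun z => Complex.sin (a * z)) (a * Complex.cos (a * z)) z := by
  have h := (Complex.hasDerivAt_sin (a * z)).comp z ((hasDerivAt_id z).const_mul a)
  rw [mul_one, mul_comm] at h
  exact h

theorem simple_root_odd_case (m : ℝ) (hm : 1 < m) (j n : ℤ)
    (hn : (j : ℝ) = n * m) (hpar : Odd (j + n)) :
    (fun z : ℂ => Complex.sin (m * Real.pi * z) - m * Complex.sin (Real.pi * z))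
        ((j : ℂ) / m) = 0 ∧
    deriv (fun z : ℂ => Complex.sin (m * Real.pi * z) - m * Complex.sin (Real.pi * z))
        ((j : ℂ) / m) ≠ 0 := by
  have hm0 : (m : ℂ) ≠ 0 := ofReal_ne_zero.mpr (by linarith)
  have hroot : (j : ℂ) / m = n := by
    rw [div_eq_iff hm0]
    exact_mod_cast hn
  have hj : (m : ℂ) * π * n = j * π := by
    rw [mul_right_comm, mul_comm (m : ℂ)]
    exact_mod_cast congrArg (fun x : ℝ => (x : ℂ) * π) hn.symm
  have hderiv : HasDerivAt
      (fun z : ℂ => Complex.sin (m * π * z) - m * Complex.sin (π * z)) _ (n : ℂ) :=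
    (Complex.hasDerivAt_sin_const_mul (m * π) (n : ℂ)).sub
      ((Complex.hasDerivAt_sin_const_mul π (n : ℂ)).const_mul (m : ℂ))
  refine ⟨?_, ?_⟩
  · simp only [hroot, hj, mul_comm (π : ℂ), Complex.sin_int_mul_pi, mul_zero, sub_zero]
  · rw [hroot, hderiv.deriv, hj, mul_comm (π : ℂ) n, Complex.cos_int_mul_pi,
      Complex.cos_int_mul_pi, ← mul_assoc, ← mul_sub]
    exact mul_ne_zero (mul_ne_zero hm0 (ofReal_ne_zero.mpr pi_ne_zero))
      (sub_ne_zero.mpr (neg_one_zpow_ne_of_odd_add (by simp) hpar))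
end

section
/- Let m > 1 be real and j ∈ ℤ. If j/m ∉ ℤ, then p(z) = sin(mπz) - m·sin(πz) has no root z with Re(z) = j/m. -/
open Complex Real

lemma my_sin_re (w : ℂ) : (Complex.sin w).re = Real.sin w.re * Real.cosh w.im := by
  rw [Complex.sin_eq]
  simp [Complex.sin_ofReal_re, Complex.cosh_ofReal_re]

theorem no_root_on_line (m : ℝ) (hm : 1 < m) (j : ℤ)
    (hj : ¬ ∃ n : ℤ, (j : ℝ) / m = n) (z : ℂ) (hz : z.re = (j : ℝ) / m) :
    Complex.sin (m * Real.pi * z) - m * Complex.sin (Real.pi * z) ≠ 0 := by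
  intro h
  have hm0 : (m : ℝ) ≠ 0 := by linarith
  have heq : Complex.sin (m * Real.pi * z) = m * Complex.sin (Real.pi * z) := by
    linear_combination h
  have hre := congrArg Complex.re heq
  have h1 : ((m : ℂ) * Real.pi * z).re = (j : ℝ) * Real.pi := by
    simp [Complex.mul_re, Complex.ofReal_mul, hz]
    field_simp
  have h2 : ((Real.pi : ℂ) * z).re = Real.pi * ((j : ℝ) / m) := by
    simp [Complex.mul_re, hz]
  have h1i : ((m : ℂ) * Real.pi * z).im = m * Real.pi * z.im := by
    simp [Complex.mul_im]
  rw [my_sin_re] at hre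
  have hrhs : ((m : ℂ) * Complex.sin (Real.pi * z)).re
      = m * (Real.sin ((Real.pi : ℂ) * z).re * Real.cosh ((Real.pi : ℂ) * z).im) := by
    rw [Complex.mul_re]
    simp [my_sin_re]
  rw [hrhs, h1, h2] at hre
  have hsj : Real.sin ((j : ℝ) * Real.pi) = 0 := Real.sin_int_mul_pi j
  rw [hsj] at hre
  have hcosh : Real.cosh ((Real.pi : ℂ) * z).im > 0 := Real.cosh_pos _
  rw [zero_mul] at hre
  have hsin0 : Real.sin (Real.pi * ((j : ℝ) / m)) = 0 := by
    rcases mul_eq_zero.mp ((mul_eq_zero.mp hre.symm).resolve_left hm0) with h' | h'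
    · exact h'
    · exact absurd h' (ne_of_gt hcosh)
  rw [Real.sin_eq_zero_iff] at hsin0
  obtain ⟨n, hn⟩ := hsin0
  apply hj
  refine ⟨n, ?_⟩
  have hnm : (n : ℝ) * m = j := by
    have h3 : Real.pi * ((n : ℝ) * m) = Real.pi * j := by
      field_simp at hn
      rw [hn]
    exact mul_left_cancel₀ Real.pi_ne_zero h3
  field_simp
  linarith [hnm]
end
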